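/- For all quaternions Z, W ∈ ℍ: Z*·I₁·Z = W*·I₁·W if and only if there exists θ ∈ ℝ such that W = (cos θ + (sin θ)·I₁)·Z. In other words, the fibres of the Hopf map K(Z) = Z*·I₁·Z are exactly the orbits of the isometric circle action α₀(θ)(Z) = exp(θI₁)·Z. -/

import Mathlib

/-- The quaternion `i` (denoted `I₁`). -/
noncomputable def I1 : Quaternion ℝ := ⟨0, 1, 0, 0⟩

@[simp] lemma I1_re : I1.re = 0 := rfl
@[simp] lemma I1_imI : I1.imI = 1 := rfl
@[simp] lemma I1_imJ : I1.imJ = 0 := rfl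
@[simp] lemma I1_imK : I1.imK = 0 := rfl

lemma I1_mul_I1 : I1 * I1 = -1 := by
  ext <;> simp [I1_re, I1_imI, I1_imJ, I1_imK, Quaternion.re_mul, Quaternion.imI_mul, Quaternion.imJ_mul,
    Quaternion.imK_mul, Quaternion.re_one, Quaternion.imI_one, Quaternion.imJ_one, Quaternion.imK_one]

lemma norm_I1 : ‖I1‖ = 1 := by
  have : Quaternion.normSq I1 = 1 := by
    rw [Quaternion.normSq_def']; simp [I1]
  have h := Quaternion.normSq_eq_norm_mul_self I1
  nlinarith [norm_nonneg I1]

lemma key_rot (θ : ℝ) :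
    star ((Real.cos θ : Quaternion ℝ) + (Real.sin θ : Quaternion ℝ) * I1) * I1 *
      ((Real.cos θ : Quaternion ℝ) + (Real.sin θ : Quaternion ℝ) * I1) = I1 := by
  have hs := Real.sin_sq_add_cos_sq θ
  ext <;>
    simp [I1_re, I1_imI, I1_imJ, I1_imK, Quaternion.re_mul, Quaternion.imI_mul, Quaternion.imJ_mul, Quaternion.imK_mul] <;>
    nlinarith [hs]

/-- The fibres of the Hopf map `K(Z) = Z* I₁ Z` are exactly the orbits of the circle
action `α₀(θ)(Z) = exp(θI₁)·Z = (cos θ + (sin θ)I₁)·Z`. -/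
theorem hopf_fibre_eq_circle_orbit (Z W : Quaternion ℝ) :
    star Z * I1 * Z = star W * I1 * W ↔
      ∃ θ : ℝ, W = ((Real.cos θ : Quaternion ℝ) + (Real.sin θ : Quaternion ℝ) * I1) * Z := by
  constructor
  · intro h
    by_cases hZ : Z = 0
    · subst hZ
      simp only [mul_zero, star_zero, zero_mul] at h
      have hI1 : I1 ≠ 0 := by
        intro hh
        have := norm_I1
        rw [hh] at this; simp at this
      have hW : W = 0 := by
        rcases mul_eq_zero.1 h.symm with h1 | h1
        · rcases mul_eq_zero.1 h1 with h2 | h2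
          · exact star_eq_zero.1 h2
          · exact absurd h2 hI1
        · exact h1
      exact ⟨0, by simp [hW]⟩
    · -- norms equal
      have hnorm : ‖W‖ = ‖Z‖ := by
        have := congrArg norm h
        rw [norm_mul, norm_mul, norm_mul, norm_mul, Quaternion.norm_star,
          Quaternion.norm_star, norm_I1] at this
        nlinarith [norm_nonneg Z, norm_nonneg W]
      set u : Quaternion ℝ := W * Z⁻¹ with hu_def
      have hW : W = u * Z := by
        rw [hu_def, mul_assoc, inv_mul_cancel₀ hZ, mul_one]
      have hnu : ‖u‖ = 1 := by
        rw [hu_def, norm_mul, norm_inv, hnorm, mul_inv_cancel₀ (norm_ne_zero_iff.2 hZ)]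
      have huu : u * star u = 1 := by
        rw [Quaternion.self_mul_star, Quaternion.normSq_eq_norm_mul_self, hnu]
        norm_num
      have hkey : star u * I1 * u = I1 := by
        have h2 : star Z * I1 * Z = star Z * (star u * I1 * u) * Z := by
          rw [h, hW, star_mul]
          simp [mul_assoc]
        have hZs : star Z ≠ 0 := star_ne_zero.2 hZ
        have h3 : star Z * I1 = star Z * (star u * I1 * u) :=
          mul_right_cancel₀ hZ (by rw [← mul_assoc] at h2 ⊢; exact h2)
        have := mul_left_cancel₀ hZs h3
        exact this.symm
      have hcomm : u * I1 = I1 * u := by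
        calc u * I1 = u * (star u * I1 * u) := by rw [hkey]
          _ = (u * star u) * I1 * u := by simp [mul_assoc]
          _ = I1 * u := by rw [huu, one_mul]
      -- coordinates
      have hJ : u.imJ = 0 ∧ u.imK = 0 := by
        have h1 := congrArg QuaternionAlgebra.imJ hcomm
        have h2 := congrArg QuaternionAlgebra.imK hcomm
        simp [I1_re, I1_imI, I1_imJ, I1_imK, Quaternion.imJ_mul, Quaternion.imK_mul] at h1 h2
        constructor <;> linarith
      have hab : u.re ^ 2 + u.imI ^ 2 = 1 := by
        have hns : Quaternion.normSq u = 1 := by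
          rw [Quaternion.normSq_eq_norm_mul_self, hnu]; norm_num
        rw [Quaternion.normSq_def'] at hns
        rw [hJ.1, hJ.2] at hns
        nlinarith
      -- get θ
      obtain ⟨θ, hcos, hsin⟩ : ∃ θ : ℝ, Real.cos θ = u.re ∧ Real.sin θ = u.imI := by
        set z : ℂ := ⟨u.re, u.imI⟩ with hz
        have hzabs : ‖z‖ = 1 := by
          simp [Complex.norm_def, Complex.normSq, hz]
          nlinarith
        have hz0 : z ≠ 0 := by
          intro hh; rw [hh] at hzabs; simp at hzabs
        refine ⟨Complex.arg z, ?_, ?_⟩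
        · rw [Complex.cos_arg hz0, hzabs]; simp [hz]
        · rw [Complex.sin_arg, hzabs]; simp [hz]
      refine ⟨θ, ?_⟩
      rw [hW]
      congr 1
      ext
      · simp [I1_re, I1_imI, I1_imJ, I1_imK, Quaternion.re_add, Quaternion.re_mul, hcos]
      · simp [I1_re, I1_imI, I1_imJ, I1_imK, Quaternion.imI_add, Quaternion.imI_mul, hsin]
      · simp [I1_re, I1_imI, I1_imJ, I1_imK, Quaternion.imJ_add, Quaternion.imJ_mul, hJ.1]
      · simp [I1_re, I1_imI, I1_imJ, I1_imK, Quaternion.imK_add, Quaternion.imK_mul, hJ.2]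
  · rintro ⟨θ, rfl⟩
    rw [star_mul]
    have : star Z * star ((Real.cos θ : Quaternion ℝ) + (Real.sin θ : Quaternion ℝ) * I1) * I1 *
        (((Real.cos θ : Quaternion ℝ) + (Real.sin θ : Quaternion ℝ) * I1) * Z) =
        star Z * (star ((Real.cos θ : Quaternion ℝ) + (Real.sin θ : Quaternion ℝ) * I1) * I1 *
          ((Real.cos θ : Quaternion ℝ) + (Real.sin θ : Quaternion ℝ) * I1)) * Z := by
      simp [mul_assoc]
    rw [this, key_rot]
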